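/- Let $\sigma > 0$, let $\theta(z)$ be a polynomial with real coefficients, let $\phi(z)$ be a polynomial with real coefficients satisfying $\phi(z) \neq 0$ whenever $|z| = 1$, let $h$ be an integer, and let $j \geq 0$ be an integer. Then $\lim_{\varepsilon \to 0^+} \int_{-\pi}^{\pi} e^{ih\nu}\, \frac{\sigma^2 \left|(1 - e^{-i\nu})^{j+1} \theta(e^{-i\nu})\right|^2}{2\pi |\phi(e^{-i\nu})|^2} \, |1 - e^{-i\nu}|^{-2(1/2 - \varepsilon)} \, d\nu = \int_{-\pi}^{\pi} e^{ih\nu}\, \frac{\sigma^2 \left|(1 - e^{-i\nu})^{j} \theta(e^{-i\nu})\right|^2}{2\pi |\phi(e^{-i\nu})|^2} \, |1 - e^{-i\nu}|^{-2(-1/2)} \, d\nu$, with all integrals converging absolutely. -/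

import Mathlib

/-- The integrand e^{ihν} · σ²|(1-e^{-iν})^j θ(e^{-iν})|²/(2π|φ(e^{-iν})|²) · |1-e^{-iν}|^{-2d}
defining the ARFIMA autocovariance with moving average polynomial (1-z)^j θ(z)
and memory parameter d. -/
noncomputable def arfimaIntegrand (σ : ℝ) (θ φ : Polynomial ℝ) (h : ℤ) (j : ℕ) (d : ℝ)
    (ν : ℝ) : ℂ :=
  Complex.exp ((h : ℂ) * (ν : ℂ) * Complex.I) *
    ((σ ^ 2 *
        ‖(1 - Complex.exp (-(↑ν * Complex.I))) ^ j *
          Polynomial.aeval (Complex.exp (-(↑ν * Complex.I))) θ‖ ^ 2 /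
        (2 * Real.pi *
          ‖Polynomial.aeval (Complex.exp (-(↑ν * Complex.I))) φ‖ ^ 2) *
        ‖1 - Complex.exp (-(↑ν * Complex.I))‖ ^ (-(2 * d)) : ℝ) : ℂ)

/-!
Since `|(1 - z) ^ j θ(z)|² = |1 - z| ^ (2j) |θ(z)|²`, the ARFIMA integrand for `(j, d)` is
`e^{ihν} c(ν) |1 - e^{-iν}| ^ p` with `c` the ARMA spectral density and `p = 2j - 2d`; it depends
on `(j, d)` only through `p`, as long as `p > 0`. The two sides of the limit have
`p = 2j + 1 + 2ε` and `p = 2j + 1`. For `p > 0` the integrand is jointly continuous in `(p, ν)`,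
so its integral over `[-π, π]` is continuous in `p`.
-/

open Complex Filter Set Topology Polynomial

namespace ARFIMA

noncomputable def diffGain (ν : ℝ) : ℝ := ‖1 - exp (-(ν * I))‖

noncomputable def armaSpectralDensity (σ : ℝ) (θ φ : ℝ[X]) (ν : ℝ) : ℝ :=
  σ ^ 2 * ‖aeval (exp (-(ν * I))) θ‖ ^ 2 / (2 * Real.pi * ‖aeval (exp (-(ν * I))) φ‖ ^ 2)

noncomputable def rpowIntegrand (σ : ℝ) (θ φ : ℝ[X]) (h : ℤ) (p ν : ℝ) : ℂ :=
  exp (h * ν * I) * ((armaSpectralDensity σ θ φ ν * diffGain ν ^ p : ℝ) : ℂ)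

lemma norm_exp_neg_ofReal_mul_I (ν : ℝ) : ‖exp (-(ν * I))‖ = 1 := by
  rw [← neg_mul, ← ofReal_neg, norm_exp_ofReal_mul_I]

lemma continuous_diffGain : Continuous diffGain := by
  unfold diffGain; fun_prop

lemma continuous_armaSpectralDensity (σ : ℝ) (θ : ℝ[X]) {φ : ℝ[X]}
    (hφ : ∀ z : ℂ, ‖z‖ = 1 → aeval z φ ≠ 0) : Continuous (armaSpectralDensity σ θ φ) := by
  refine Continuous.div (by fun_prop) (by fun_prop) fun ν => ?_
  have := hφ _ (norm_exp_neg_ofReal_mul_I ν)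
  positivity

lemma sq_pow_mul_rpow_neg {x : ℝ} (hx : 0 ≤ x) {j : ℕ} {d : ℝ} (hd : 0 < 2 * (j : ℝ) - 2 * d) :
    (x ^ j) ^ 2 * x ^ (-(2 * d)) = x ^ (2 * (j : ℝ) - 2 * d) := by
  rw [sub_eq_add_neg, Real.rpow_add' hx (by rw [← sub_eq_add_neg]; exact hd.ne'), ← pow_mul',
    ← Real.rpow_natCast]
  push_cast; rfl

lemma arfimaIntegrand_eq_rpowIntegrand (σ : ℝ) (θ φ : ℝ[X]) (h : ℤ) {j : ℕ} {d : ℝ}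
    (hd : 0 < 2 * (j : ℝ) - 2 * d) :
    arfimaIntegrand σ θ φ h j d = rpowIntegrand σ θ φ h (2 * j - 2 * d) := by
  ext ν
  simp only [arfimaIntegrand, rpowIntegrand, armaSpectralDensity, diffGain, norm_mul, norm_pow,
    ← sq_pow_mul_rpow_neg (norm_nonneg _) hd]
  ring_nf

lemma continuousAt_rpowIntegrand (σ : ℝ) (θ : ℝ[X]) {φ : ℝ[X]}
    (hφ : ∀ z : ℂ, ‖z‖ = 1 → aeval z φ ≠ 0) (h : ℤ) {p : ℝ} (hp : 0 < p) (ν : ℝ) :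
    ContinuousAt (Function.uncurry (rpowIntegrand σ θ φ h)) (p, ν) := by
  have hsnd : Continuous (Prod.snd : ℝ × ℝ → ℝ) := continuous_snd
  have hgain : ContinuousAt (fun q : ℝ × ℝ => diffGain q.2 ^ q.1) (p, ν) :=
    (continuous_diffGain.comp hsnd).continuousAt.rpow continuousAt_fst (Or.inr hp)
  have hdens := (continuous_armaSpectralDensity σ θ hφ).comp hsnd
  unfold Function.uncurry rpowIntegrand
  exact ((by fun_prop : Continuous fun q : ℝ × ℝ => exp (h * q.2 * I)).continuousAt).mul
    (continuous_ofReal.continuousAt.comp (hdens.continuousAt.mul hgain))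

lemma continuous_rpowIntegrand (σ : ℝ) (θ : ℝ[X]) {φ : ℝ[X]}
    (hφ : ∀ z : ℂ, ‖z‖ = 1 → aeval z φ ≠ 0) (h : ℤ) {p : ℝ} (hp : 0 < p) :
    Continuous (rpowIntegrand σ θ φ h p) :=
  continuous_iff_continuousAt.2 fun ν =>
    (continuousAt_rpowIntegrand σ θ hφ h hp ν).comp (Continuous.prodMk_right p).continuousAt

lemma continuousOn_intervalIntegral_rpowIntegrand (σ : ℝ) (θ : ℝ[X]) {φ : ℝ[X]}
    (hφ : ∀ z : ℂ, ‖z‖ = 1 → aeval z φ ≠ 0) (h : ℤ) (a b : ℝ) :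
    ContinuousOn (fun p => ∫ ν in a..b, rpowIntegrand σ θ φ h p ν) (Ioi 0) := by
  rw [continuousOn_iff_continuous_domRestrict]
  refine intervalIntegral.continuous_parametric_intervalIntegral_of_continuous' ?_ a b
  refine continuous_iff_continuousAt.2 fun q => ?_
  exact (continuousAt_rpowIntegrand σ θ hφ h q.1.2 q.2).comp (f := Prod.map Subtype.val id)
    (continuous_subtype_val.prodMap continuous_id).continuousAt

end ARFIMA

open ARFIMA

theorem stmt_1_general (σ : ℝ) (θ φ : Polynomial ℝ)
    (hφ : ∀ z : ℂ, ‖z‖ = 1 → Polynomial.aeval z φ ≠ 0) (h : ℤ) (j : ℕ) :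
    (∀ ε : ℝ, 0 < ε →
      IntervalIntegrable (arfimaIntegrand σ θ φ h (j + 1) (1 / 2 - ε))
        MeasureTheory.volume (-Real.pi) Real.pi) ∧
    IntervalIntegrable (arfimaIntegrand σ θ φ h j (-(1 / 2)))
      MeasureTheory.volume (-Real.pi) Real.pi ∧
    Filter.Tendsto
      (fun ε : ℝ => ∫ ν in (-Real.pi)..Real.pi, arfimaIntegrand σ θ φ h (j + 1) (1 / 2 - ε) ν)
      (nhdsWithin 0 (Set.Ioi 0))
      (nhds (∫ ν in (-Real.pi)..Real.pi, arfimaIntegrand σ θ φ h j (-(1 / 2)) ν)) := by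
  set p₀ : ℝ := 2 * j + 1
  have hp₀ : 0 < p₀ := by positivity
  have hshort : ∀ ε : ℝ, 0 < ε →
      arfimaIntegrand σ θ φ h (j + 1) (1 / 2 - ε) = rpowIntegrand σ θ φ h (p₀ + 2 * ε) := by
    intro ε hε
    rw [arfimaIntegrand_eq_rpowIntegrand σ θ φ h (by push_cast; linarith)]
    congr 1
    push_cast
    ring
  have hlimit : arfimaIntegrand σ θ φ h j (-(1 / 2)) = rpowIntegrand σ θ φ h p₀ := by
    rw [arfimaIntegrand_eq_rpowIntegrand σ θ φ h (by linarith)]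
    congr 1
    ring
  refine ⟨fun ε hε => ?_, ?_, ?_⟩
  · rw [hshort ε hε]
    exact (continuous_rpowIntegrand σ θ hφ h (by positivity)).intervalIntegrable _ _
  · rw [hlimit]
    exact (continuous_rpowIntegrand σ θ hφ h hp₀).intervalIntegrable _ _
  · have hcont := (continuousOn_intervalIntegral_rpowIntegrand σ θ hφ h (-Real.pi)
      Real.pi).continuousAt (Ioi_mem_nhds hp₀)
    have hexponent : Tendsto (fun ε : ℝ => p₀ + 2 * ε) (𝓝[>] 0) (𝓝 p₀) := by
      refine ((continuous_const.add (continuous_const.mul continuous_id)).tendsto' 0 p₀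
        ?_).mono_left nhdsWithin_le_nhds
      simp [p₀]
    rw [hlimit]
    refine (hcont.tendsto.comp hexponent).congr' ?_
    filter_upwards [self_mem_nhdsWithin] with ε hε
    simp only [Function.comp_apply, hshort ε hε]

/-- as ε → 0⁺, the autocovariance of the stationary ARFIMA process with
moving average polynomial (1-z)^{j+1}θ(z) and memory parameter 1/2 - ε converges to
the autocovariance at memory parameter -1/2 of the process with moving average
polynomial (1-z)^j θ(z), all integrals converging absolutely. -/
theorem stmt_1 (σ : ℝ) (hσ : 0 < σ) (θ φ : Polynomial ℝ)
    (hφ : ∀ z : ℂ, ‖z‖ = 1 → Polynomial.aeval z φ ≠ 0) (h : ℤ) (j : ℕ) :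
    (∀ ε : ℝ, 0 < ε →
      IntervalIntegrable (arfimaIntegrand σ θ φ h (j + 1) (1 / 2 - ε))
        MeasureTheory.volume (-Real.pi) Real.pi) ∧
    IntervalIntegrable (arfimaIntegrand σ θ φ h j (-(1 / 2)))
      MeasureTheory.volume (-Real.pi) Real.pi ∧
    Filter.Tendsto
      (fun ε : ℝ => ∫ ν in (-Real.pi)..Real.pi, arfimaIntegrand σ θ φ h (j + 1) (1 / 2 - ε) ν)
      (nhdsWithin 0 (Set.Ioi 0))
      (nhds (∫ ν in (-Real.pi)..Real.pi, arfimaIntegrand σ θ φ h j (-(1 / 2)) ν)) :=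
  stmt_1_general σ θ φ hφ h j
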